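/- arXiv:math/0610259 — 2 statements merged into one kernel-verified Lean document; each statement's English description precedes it below -/
import Mathlib

section
/- Let D be a domain in ℝ^N, N ≥ 2, and let u : D → [-∞,∞) be almost subharmonic, i.e. u ∈ L¹_loc(D) and for almost every x ∈ D and every r > 0 with B̄^N(x,r) ⊂ D one has u(x) ≤ (1/(ν_N r^N)) ∫_{B^N(x,r)} u dm_N. Let D₁ := { x ∈ D : u(x) ≤ (1/(ν_N r^N)) ∫_{B^N(x,r)} u dm_N for all closed balls B̄^N(x,r) ⊂ D } and define ũ : D → [-∞,∞) by ũ(x) = u(x) for x ∈ D₁ and ũ(x) = −∞ for x ∈ D \ D₁. Then ũ is nearly subharmonic in D. -/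
open MeasureTheory Metric Set Filter
open scoped ENNReal NNReal Topology

noncomputable section

/-- `ℝ^N` with the Euclidean metric. -/
abbrev Eucl (N : ℕ) := EuclideanSpace ℝ (Fin N)

/-- The positive part of an extended real number, as an element of `ℝ≥0∞`. -/
noncomputable def ERealPos (x : EReal) : ℝ≥0∞ :=
  if x = ⊤ then ⊤ else ENNReal.ofReal x.toReal

/-- The (extended-real valued) Lebesgue integral of an extended-real valued function:
the upper integral of its positive part minus the upper integral of its negative part. -/
noncomputable def eIntegral {α : Type*} [MeasurableSpace α] (μ : Measure α)
    (f : α → EReal) : EReal :=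
  ((∫⁻ a, ERealPos (f a) ∂μ : ℝ≥0∞) : EReal) - ((∫⁻ a, ERealPos (-(f a)) ∂μ : ℝ≥0∞) : EReal)

/-- `u(x) ≤ (K/(ν_N r^N)) ∫_{B(x,r)} u dm_N`; note that `ν_N r^N` is exactly the Lebesgue
measure of the ball `B^N(x,r)`. -/
def MeanIneqAt {N : ℕ} (K : ℝ) (u : Eucl N → EReal) (x : Eucl N) (r : ℝ) : Prop :=
  u x ≤ ((K / (volume (ball x r)).toReal : ℝ) : EReal) *
    eIntegral (volume.restrict (ball x r)) u

/-- The mean value inequality with constant `K`, for all closed balls contained in `D`. -/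
def MeanIneqOn {N : ℕ} (K : ℝ) (u : Eucl N → EReal) (D : Set (Eucl N)) : Prop :=
  ∀ x : Eucl N, ∀ r : ℝ, 0 < r → closedBall x r ⊆ D → MeanIneqAt K u x r

/-- `u⁺ ∈ L¹_loc(D)`: the positive part of `u` is integrable on every compact subset of `D`. -/
def PosPartLocInt {N : ℕ} (u : Eucl N → EReal) (D : Set (Eucl N)) : Prop :=
  ∀ C : Set (Eucl N), C ⊆ D → IsCompact C → (∫⁻ x in C, ERealPos (u x) ∂volume) < ⊤

/-- `u ∈ L¹_loc(D)` for an extended-real valued `u`. -/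
def ERealLocInt {N : ℕ} (u : Eucl N → EReal) (D : Set (Eucl N)) : Prop :=
  PosPartLocInt u D ∧ PosPartLocInt (fun x => -(u x)) D

/-- `u` is nearly subharmonic on `D`. -/
def NearlySubharmonicOn {N : ℕ} (u : Eucl N → EReal) (D : Set (Eucl N)) : Prop :=
  AEMeasurable u (volume.restrict D) ∧ PosPartLocInt u D ∧ MeanIneqOn 1 u D

/-- `u` is `K`-quasi-nearly subharmonic n.s. (in the narrow sense) on `D`. -/
def QNSubharmonicNSOn {N : ℕ} (K : ℝ) (u : Eucl N → EReal) (D : Set (Eucl N)) : Prop :=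
  AEMeasurable u (volume.restrict D) ∧ PosPartLocInt u D ∧ MeanIneqOn K u D

/-- `u_M := max{u, -M} + M`. -/
noncomputable def shiftPos {N : ℕ} (u : Eucl N → EReal) (M : ℝ) : Eucl N → EReal :=
  fun x => max (u x) ((-M : ℝ) : EReal) + ((M : ℝ) : EReal)

/-- `u` is `K`-quasi-nearly subharmonic on `D`. -/
def QNSubharmonicOn {N : ℕ} (K : ℝ) (u : Eucl N → EReal) (D : Set (Eucl N)) : Prop :=
  AEMeasurable u (volume.restrict D) ∧ PosPartLocInt u D ∧
    ∀ M : ℝ, 0 ≤ M → MeanIneqOn K (shiftPos u M) D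

/-- `u` is subharmonic on `D`: upper semicontinuous and satisfying the mean value
inequality on all closed balls contained in `D` (the constant `-∞` is allowed). -/
def SubharmonicOn {N : ℕ} (u : Eucl N → EReal) (D : Set (Eucl N)) : Prop :=
  UpperSemicontinuousOn u D ∧ MeanIneqOn 1 u D

/-- `h` is harmonic on `D`: continuous and satisfying the mean value equality. -/
def HarmonicMVOn {N : ℕ} (h : Eucl N → ℝ) (D : Set (Eucl N)) : Prop :=
  ContinuousOn h D ∧ ∀ x : Eucl N, ∀ r : ℝ, 0 < r → closedBall x r ⊆ D →
    h x = ⨍ y in ball x r, h y ∂volume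

/-- The Δ₂-condition for a function on `[0,∞)`. -/
def Delta2 (φ : ℝ → ℝ) : Prop :=
  ∃ C ≥ (1 : ℝ), ∀ t ≥ (0 : ℝ), φ (2 * t) ≤ C * φ t

/-- Permissible functions `ψ : [0,∞) → [0,∞)`. -/
def Permissible (ψ : ℝ → ℝ) : Prop :=
  ∃ ψ₁ ψ₂ : ℝ → ℝ,
    (∀ t ≥ (0 : ℝ), 0 ≤ ψ₁ t) ∧ MonotoneOn ψ₁ (Ici 0) ∧ ConvexOn ℝ (Ici 0) ψ₁ ∧
    Delta2 ψ₁ ∧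
    (∀ t ≥ (0 : ℝ), 0 ≤ ψ₂ t) ∧ StrictMonoOn ψ₂ (Ici 0) ∧
    (∀ s ≥ (0 : ℝ), ∃ t ≥ (0 : ℝ), ψ₂ t = s) ∧
    (∃ C ≥ (1 : ℝ), ∀ s a b : ℝ, 0 ≤ s → 0 ≤ a → 0 ≤ b →
      ψ₂ a = s → ψ₂ b = 2 * s → b ≤ C * a) ∧
    (∃ C > (0 : ℝ), ∀ s t : ℝ, 0 ≤ s → s ≤ t → C * (ψ₂ t / t) ≤ ψ₂ s / s) ∧
    (∀ t ≥ (0 : ℝ), ψ t = ψ₂ (ψ₁ t))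

/-- `ψ` is non-constant on `[0,∞)`. -/
def NonConstantOnNonneg (ψ : ℝ → ℝ) : Prop :=
  ∃ s ≥ (0 : ℝ), ∃ t ≥ (0 : ℝ), ψ s ≠ ψ t

/-- `u` is a `λ`-Harnack function on `D`. -/
def HarnackOn {N : ℕ} (lam : ℝ) (u : Eucl N → ℝ) (D : Set (Eucl N)) : Prop :=
  ContinuousOn u D ∧ (∀ x ∈ D, 0 ≤ u x) ∧
    ∃ C ≥ (1 : ℝ), ∀ x : Eucl N, ∀ r : ℝ, 0 < r → closedBall x r ⊆ D →
      ∀ z₁ ∈ closedBall x (lam * r), ∀ z₂ ∈ closedBall x (lam * r), u z₁ ≤ C * u z₂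

/-- Lebesgue measure of the unit ball in `ℝ^N`. -/
noncomputable def unitBallVol (N : ℕ) : ℝ := (volume (ball (0 : Eucl N) 1)).toReal

/-- Identify `ℝ^m × ℝ^n` with `ℝ^(m+n)`. -/
noncomputable def joinE {m n : ℕ} (x : Eucl m) (y : Eucl n) : Eucl (m + n) :=
  (EuclideanSpace.equiv (Fin (m + n)) ℝ).symm
    (Fin.append (EuclideanSpace.equiv (Fin m) ℝ x) (EuclideanSpace.equiv (Fin n) ℝ y))

/-- The section `Ω(y) = {x ∈ ℝ^m : (x,y) ∈ Ω}`. -/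
def secY {m n : ℕ} (Ω : Set (Eucl (m + n))) (y : Eucl n) : Set (Eucl m) :=
  {x : Eucl m | joinE x y ∈ Ω}

/-- The section `Ω(x) = {y ∈ ℝ^n : (x,y) ∈ Ω}`. -/
def secX {m n : ℕ} (Ω : Set (Eucl (m + n))) (x : Eucl m) : Set (Eucl n) :=
  {y : Eucl n | joinE x y ∈ Ω}

open Classical in
/-- if `u` is almost subharmonic on `D`, then the function `ũ` obtained by
redefining `u` to be `-∞` outside the set `D₁` of points where the mean value inequality
holds for all closed balls in `D` is nearly subharmonic on `D`. -/
theorem almostSubharmonic_modification_nearlySubharmonic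
    {N : ℕ} (hN : 2 ≤ N) (D : Set (Eucl N)) (hDopen : IsOpen D) (hDconn : IsConnected D)
    (u : Eucl N → EReal) (hu_top : ∀ x ∈ D, u x ≠ ⊤)
    (hu_meas : AEMeasurable u (volume.restrict D)) (hu_loc : ERealLocInt u D)
    (hu_ae : ∀ᵐ x ∂(volume.restrict D),
      ∀ r : ℝ, 0 < r → closedBall x r ⊆ D → MeanIneqAt 1 u x r) :
    NearlySubharmonicOn
      (fun x => if x ∈ D ∧ ∀ r : ℝ, 0 < r → closedBall x r ⊆ D → MeanIneqAt 1 u x r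
        then u x else ⊥) D := by
  have hDmeas : MeasurableSet D := hDopen.measurableSet
  have hae : ∀ᵐ x ∂(volume.restrict D),
      (if x ∈ D ∧ ∀ r : ℝ, 0 < r → closedBall x r ⊆ D → MeanIneqAt 1 u x r
        then u x else ⊥) = u x := by
    filter_upwards [hu_ae, ae_restrict_mem hDmeas] with x hx hxD
    rw [if_pos ⟨hxD, hx⟩]
  have hae' : (fun x => if x ∈ D ∧ ∀ r : ℝ, 0 < r → closedBall x r ⊆ D → MeanIneqAt 1 u x r
      then u x else ⊥) =ᶠ[ae (volume.restrict D)] u := hae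
  refine ⟨hu_meas.congr hae'.symm, ?_, ?_⟩
  · intro C hCD hC
    have h1 : ∀ᵐ x ∂(volume.restrict C),
        ERealPos ((if x ∈ D ∧ ∀ r : ℝ, 0 < r → closedBall x r ⊆ D → MeanIneqAt 1 u x r
          then u x else ⊥)) = ERealPos (u x) := by
      filter_upwards [ae_restrict_of_ae_restrict_of_subset hCD hae] with x hx
      rw [hx]
    rw [lintegral_congr_ae h1]
    exact hu_loc.1 C hCD hC
  · intro x r hr hball
    by_cases hx : x ∈ D ∧ ∀ r : ℝ, 0 < r → closedBall x r ⊆ D → MeanIneqAt 1 u x r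
    · have hxr := hx.2 r hr hball
      have hbD : ball x r ⊆ D := ball_subset_closedBall.trans hball
      have haeB : ∀ᵐ y ∂(volume.restrict (ball x r)),
          (if y ∈ D ∧ ∀ r : ℝ, 0 < r → closedBall y r ⊆ D → MeanIneqAt 1 u y r
            then u y else ⊥) = u y :=
        ae_restrict_of_ae_restrict_of_subset hbD hae
      have hE : eIntegral (volume.restrict (ball x r))
            (fun y => if y ∈ D ∧ ∀ r : ℝ, 0 < r → closedBall y r ⊆ D → MeanIneqAt 1 u y r
              then u y else ⊥)
          = eIntegral (volume.restrict (ball x r)) u := by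
        unfold eIntegral
        congr 1
        · congr 1
          apply lintegral_congr_ae
          filter_upwards [haeB] with y hy
          rw [hy]
        · congr 1
          apply lintegral_congr_ae
          filter_upwards [haeB] with y hy
          rw [hy]
      unfold MeanIneqAt at hxr
      rw [← hE] at hxr
      exact le_of_eq_of_le (if_pos hx) hxr
    · exact le_of_eq_of_le (if_neg hx) bot_le

end
end

section
/- Let D be a domain in ℝ^N, N ≥ 2. A function u : D → [-∞,∞) is 1-quasi-nearly subharmonic if and only if it is nearly subharmonic (equivalently, 1-quasi-nearly subharmonic n.s.). -/
open MeasureTheory Metric Set Filter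
open scoped ENNReal NNReal Topology

noncomputable section

/-! Write `u⁺`, `u⁻` for the positive and negative parts of `u` and `u_M = max u (-M) + M`.
Pointwise `u_M⁺ + min u⁻ M = u⁺ + M`, so over a ball the mean of `u_M` is `M` plus the mean of
`u⁺ - min u⁻ M`. Hence, when `u(x) > -M`, the mean value inequality for `u_M` at `x` is the one
for `u` with `u⁻` replaced by `min u⁻ M`: it follows from the inequality for `u`, and conversely
letting `M → ∞` gives back the inequality for `u` by monotone convergence. When `u(x) ≤ -M` it
holds trivially, as `u_M(x) = 0`. -/

lemma measurable_ERealPos : Measurable ERealPos :=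
  Measurable.ite (measurableSet_singleton ⊤) measurable_const
    (ENNReal.measurable_ofReal.comp measurable_ereal_toReal)

lemma ERealPos_coe (t : ℝ) : ERealPos t = ENNReal.ofReal t := by
  simp [ERealPos]

lemma ERealPos_neg_eq_zero_of_nonneg {w : EReal} (hw : 0 ≤ w) : ERealPos (-w) = 0 := by
  induction w with
  | bot => simp at hw
  | coe t => simpa [← EReal.coe_neg, ERealPos_coe] using EReal.coe_nonneg.mp hw
  | top => simp [ERealPos]

lemma ERealPos_max_add_add_min_neg {v : EReal} (hv : v ≠ ⊤) {M : ℝ} (hM : 0 ≤ M) :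
    ERealPos (max v (-M : ℝ) + M) + min (ERealPos (-v)) (ENNReal.ofReal M) =
      ERealPos v + ENNReal.ofReal M := by
  induction v with
  | bot =>
    rw [max_eq_right bot_le, ← EReal.coe_add, neg_add_cancel]
    simp [ERealPos]
  | coe t =>
    rw [← EReal.coe_strictMono.monotone.map_max, ← EReal.coe_add, ← EReal.coe_neg, ERealPos_coe,
      ERealPos_coe, ERealPos_coe, ← ENNReal.ofReal_min]
    rcases le_total 0 t with ht | ht
    · rw [max_eq_left (by linarith), min_eq_left (by linarith),
        ENNReal.ofReal_of_nonpos (p := -t) (by linarith), add_zero, ENNReal.ofReal_add ht hM]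
    rcases le_total (-M) t with htM | htM
    · rw [max_eq_left htM, min_eq_left (by linarith), ENNReal.ofReal_of_nonpos ht, zero_add,
        ← ENNReal.ofReal_add (by linarith) (by linarith)]
      ring_nf
    · rw [max_eq_right htM, min_eq_right (by linarith), ENNReal.ofReal_of_nonpos ht]
      simp
  | top => exact absurd rfl hv

lemma shiftPos_nonneg {N : ℕ} (u : Eucl N → EReal) (M : ℝ) (y : Eucl N) :
    0 ≤ shiftPos u M y := by
  have h : ((-M : ℝ) : EReal) + M ≤ shiftPos u M y := add_le_add_left (le_max_right _ _) _
  rwa [← EReal.coe_add, neg_add_cancel, EReal.coe_zero] at h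

lemma eIntegral_shiftPos {N : ℕ} (μ : Measure (Eucl N)) (u : Eucl N → EReal) (M : ℝ) :
    eIntegral μ (shiftPos u M) = ((∫⁻ y, ERealPos (shiftPos u M y) ∂μ : ℝ≥0∞) : EReal) := by
  simp [eIntegral, ERealPos_neg_eq_zero_of_nonneg (shiftPos_nonneg u M _)]

lemma lintegral_shiftPos_add_lintegral_min {N : ℕ} {μ : Measure (Eucl N)} {u : Eucl N → EReal}
    (hu : AEMeasurable u μ) (hu_top : ∀ᵐ y ∂μ, u y ≠ ⊤) {M : ℝ} (hM : 0 ≤ M) :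
    ∫⁻ y, ERealPos (shiftPos u M y) ∂μ + ∫⁻ y, min (ERealPos (-u y)) (ENNReal.ofReal M) ∂μ =
      ∫⁻ y, ERealPos (u y) ∂μ + ENNReal.ofReal M * μ univ := by
  have hmin : AEMeasurable (fun y => min (ERealPos (-u y)) (ENNReal.ofReal M)) μ :=
    ((measurable_ERealPos.comp measurable_neg).comp_aemeasurable hu).min aemeasurable_const
  rw [← lintegral_add_right' _ hmin, ← lintegral_const, ← lintegral_add_right' _ aemeasurable_const]
  exact lintegral_congr_ae (hu_top.mono fun y hy => ERealPos_max_add_add_min_neg hy hM)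

lemma iSup_min_ofReal_add_natCast (a : ℝ≥0∞) (M₀ : ℝ) :
    ⨆ n : ℕ, min a (ENNReal.ofReal (M₀ + n)) = a := by
  refine le_antisymm (iSup_le fun _ => min_le_left _ _) (le_of_forall_lt fun b hb => ?_)
  obtain ⟨n, hn⟩ := exists_nat_gt (b.toReal - M₀)
  have hb_lt : b < ENNReal.ofReal (M₀ + n) := by
    rw [← ENNReal.ofReal_toReal hb.ne_top]
    exact (ENNReal.ofReal_lt_ofReal_iff (by linarith [ENNReal.toReal_nonneg (a := b)])).mpr
      (by linarith)
  exact lt_iSup_iff.mpr ⟨n, lt_min hb hb_lt⟩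

lemma coe_le_one_div_mul_sub_iff {t V : ℝ} (hV : 0 < V) {P Q : ℝ≥0∞} (hP : P ≠ ⊤) :
    (t : EReal) ≤ ((1 / V : ℝ) : EReal) * ((P : EReal) - Q) ↔
      Q ≠ ⊤ ∧ t * V + Q.toReal ≤ P.toReal := by
  rcases eq_or_ne Q ⊤ with rfl | hQ
  · rw [EReal.coe_ennreal_top, EReal.sub_top,
      EReal.mul_bot_of_pos (EReal.coe_pos.mpr (one_div_pos.mpr hV))]
    simp
  rw [← ENNReal.ofReal_toReal hP, ← ENNReal.ofReal_toReal hQ, EReal.coe_ennreal_ofReal,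
    EReal.coe_ennreal_ofReal, max_eq_left ENNReal.toReal_nonneg, max_eq_left ENNReal.toReal_nonneg,
    ← EReal.coe_sub, ← EReal.coe_mul, EReal.coe_le_coe_iff,
    ENNReal.toReal_ofReal ENNReal.toReal_nonneg, ENNReal.toReal_ofReal ENNReal.toReal_nonneg,
    one_div_mul_eq_div, le_div_iff₀ hV]
  simp only [ne_eq, ENNReal.ofReal_ne_top, not_false_eq_true, true_and]
  constructor <;> intro h <;> linarith

lemma le_mean_iff_forall_shiftPos {N : ℕ} {μ : Measure (Eucl N)} [IsFiniteMeasure μ]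
    (hμ : μ ≠ 0) {u : Eucl N → EReal} (hu : AEMeasurable u μ) (hu_top : ∀ᵐ y ∂μ, u y ≠ ⊤)
    (hP : ∫⁻ y, ERealPos (u y) ∂μ ≠ ⊤) {v : EReal} (hv : v ≠ ⊤) :
    v ≤ ((1 / (μ univ).toReal : ℝ) : EReal) * eIntegral μ u ↔
      ∀ M : ℝ, 0 ≤ M →
        max v (-M : ℝ) + M ≤ ((1 / (μ univ).toReal : ℝ) : EReal) * eIntegral μ (shiftPos u M) := by
  set V := (μ univ).toReal
  have hV : 0 < V := ENNReal.toReal_pos (Measure.measure_univ_ne_zero.mpr hμ) (measure_ne_top _ _)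
  set P := ∫⁻ y, ERealPos (u y) ∂μ
  set Q := ∫⁻ y, ERealPos (-u y) ∂μ
  set c : ℝ → ℝ≥0∞ := fun M => ∫⁻ y, min (ERealPos (-u y)) (ENNReal.ofReal M) ∂μ
  have hneg_meas : AEMeasurable (fun y => ERealPos (-u y)) μ :=
    (measurable_ERealPos.comp measurable_neg).comp_aemeasurable hu
  have hc_le : ∀ M, c M ≤ Q := fun M => lintegral_mono fun _ => min_le_left _ _
  have hc_ne_top : ∀ M, c M ≠ ⊤ := fun M =>
    ((lintegral_mono fun _ => min_le_right _ _).trans_lt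
      (by simp [ENNReal.mul_lt_top, measure_lt_top])).ne
  have hQ_eq_iSup : ∀ M₀ : ℝ, Q = ⨆ n : ℕ, c (M₀ + n) := fun M₀ => by
    rw [← lintegral_iSup' (fun n => hneg_meas.min aemeasurable_const) (ae_of_all _ fun y m n hmn =>
      min_le_min le_rfl (ENNReal.ofReal_le_ofReal (by gcongr)))]
    simp only [iSup_min_ofReal_add_natCast]
    rfl
  have hshift : ∀ M t : ℝ, 0 ≤ M → -M ≤ t →
      (max (t : EReal) (-M : ℝ) + M ≤ ((1 / V : ℝ) : EReal) * eIntegral μ (shiftPos u M) ↔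
        t * V + (c M).toReal ≤ P.toReal) := fun M t hM ht => by
    have hsum := lintegral_shiftPos_add_lintegral_min hu hu_top hM
    have ha : ∫⁻ y, ERealPos (shiftPos u M y) ∂μ ≠ ⊤ :=
      ne_top_of_le_ne_top (ENNReal.add_ne_top.mpr ⟨hP, by finiteness⟩) (hsum ▸ le_self_add)
    have hsum_real := congrArg ENNReal.toReal hsum
    rw [ENNReal.toReal_add ha (hc_ne_top M), ENNReal.toReal_add hP (by finiteness),
      ENNReal.toReal_mul, ENNReal.toReal_ofReal hM] at hsum_real
    have := coe_le_one_div_mul_sub_iff hV (t := t + M) (Q := 0) ha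
    rw [EReal.coe_ennreal_zero, sub_zero] at this
    rw [eIntegral_shiftPos, max_eq_left (EReal.coe_le_coe_iff.mpr ht), ← EReal.coe_add, this]
    simp only [ne_eq, ENNReal.zero_ne_top, not_false_eq_true, ENNReal.toReal_zero, add_zero,
      true_and]
    constructor <;> intro h <;> nlinarith
  constructor
  · intro h M hM
    rcases le_or_gt v (-M : ℝ) with hvM | hvM
    · rw [max_eq_right hvM, ← EReal.coe_add, neg_add_cancel, EReal.coe_zero, eIntegral_shiftPos]
      exact EReal.mul_nonneg (EReal.coe_nonneg.mpr (by positivity)) (EReal.coe_ennreal_nonneg _)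
    obtain ⟨t, rfl⟩ : ∃ t : ℝ, v = t := ⟨v.toReal, (EReal.coe_toReal hv (ne_bot_of_gt hvM)).symm⟩
    obtain ⟨hQ, htQ⟩ := (coe_le_one_div_mul_sub_iff hV hP).mp h
    rw [hshift M t hM (EReal.coe_lt_coe_iff.mp hvM).le]
    linarith [ENNReal.toReal_mono hQ (hc_le M)]
  · intro h
    rcases eq_or_ne v ⊥ with rfl | hbot
    · exact bot_le
    obtain ⟨t, rfl⟩ : ∃ t : ℝ, v = t := ⟨v.toReal, (EReal.coe_toReal hv hbot).symm⟩
    set M₀ := max 0 (-t)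
    have hbound : ∀ n : ℕ, t * V + (c (M₀ + n)).toReal ≤ P.toReal := fun n => by
      have hM : 0 ≤ M₀ + n := by positivity
      refine (hshift _ t hM ?_).mp (h _ hM)
      linarith [le_max_right 0 (-t), n.cast_nonneg (α := ℝ)]
    have hPt : 0 ≤ P.toReal - t * V :=
      sub_nonneg.mpr ((le_add_of_nonneg_right ENNReal.toReal_nonneg).trans (hbound 0))
    have hQ : Q ≤ ENNReal.ofReal (P.toReal - t * V) := hQ_eq_iSup M₀ ▸ iSup_le fun n =>
      (ENNReal.le_ofReal_iff_toReal_le (hc_ne_top _) hPt).mpr (by linarith [hbound n])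
    have hQ_ne_top : Q ≠ ⊤ := ne_top_of_le_ne_top ENNReal.ofReal_ne_top hQ
    refine (coe_le_one_div_mul_sub_iff hV hP).mpr ⟨hQ_ne_top, ?_⟩
    linarith [(ENNReal.le_ofReal_iff_toReal_le hQ_ne_top hPt).mp hQ]

lemma meanIneqAt_one_iff_forall_shiftPos {N : ℕ} {D : Set (Eucl N)} {u : Eucl N → EReal}
    (hu : AEMeasurable u (volume.restrict D)) (hu_pos : PosPartLocInt u D)
    (hu_top : ∀ x ∈ D, u x ≠ ⊤) {x : Eucl N} {r : ℝ} (hr : 0 < r) (hxr : closedBall x r ⊆ D) :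
    MeanIneqAt 1 u x r ↔ ∀ M : ℝ, 0 ≤ M → MeanIneqAt 1 (shiftPos u M) x r := by
  have hball : ball x r ⊆ D := ball_subset_closedBall.trans hxr
  have : IsFiniteMeasure (volume.restrict (ball x r)) :=
    isFiniteMeasure_restrict.mpr measure_ball_lt_top.ne
  have hP : ∫⁻ y in ball x r, ERealPos (u y) ≠ ⊤ :=
    ((lintegral_mono_set ball_subset_closedBall).trans_lt
      (hu_pos _ hxr (isCompact_closedBall x r))).ne
  have key := le_mean_iff_forall_shiftPos
    (Measure.restrict_eq_zero.not.mpr (measure_ball_pos _ x hr).ne')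
    (hu.mono_measure (Measure.restrict_mono hball le_rfl))
    (ae_restrict_of_forall_mem measurableSet_ball fun y hy => hu_top y (hball hy)) hP
    (hu_top x (hxr (mem_closedBall_self hr.le)))
  rw [Measure.restrict_apply_univ] at key
  exact key

theorem qns_one_iff_nearlySubharmonic_general
    {N : ℕ} (D : Set (Eucl N)) (u : Eucl N → EReal) (hu_top : ∀ x ∈ D, u x ≠ ⊤) :
    (QNSubharmonicOn 1 u D ↔ NearlySubharmonicOn u D) ∧
    (NearlySubharmonicOn u D ↔ QNSubharmonicNSOn 1 u D) := by
  refine ⟨⟨fun ⟨hu, hu_pos, hmean⟩ => ⟨hu, hu_pos, fun x r hr hxr => ?_⟩,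
    fun ⟨hu, hu_pos, hmean⟩ => ⟨hu, hu_pos, fun M hM x r hr hxr => ?_⟩⟩, Iff.rfl⟩
  · exact (meanIneqAt_one_iff_forall_shiftPos hu hu_pos hu_top hr hxr).mpr
      fun M hM => hmean M hM x r hr hxr
  · exact (meanIneqAt_one_iff_forall_shiftPos hu hu_pos hu_top hr hxr).mp (hmean x r hr hxr) M hM

/-- `u` is `1`-quasi-nearly subharmonic iff it is nearly subharmonic,
equivalently `1`-quasi-nearly subharmonic n.s. -/
theorem qns_one_iff_nearlySubharmonic
    {N : ℕ} (hN : 2 ≤ N) (D : Set (Eucl N)) (hDopen : IsOpen D) (hDconn : IsConnected D)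
    (u : Eucl N → EReal) (hu_top : ∀ x ∈ D, u x ≠ ⊤) :
    (QNSubharmonicOn 1 u D ↔ NearlySubharmonicOn u D) ∧
    (NearlySubharmonicOn u D ↔ QNSubharmonicNSOn 1 u D) :=
  qns_one_iff_nearlySubharmonic_general D u hu_top

end
end
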